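/- Let R₀ ≥ 1 and let v : ℝ² → ℝ be twice continuously differentiable on {x : |x| ≥ R₀} with v(x) → 0 as |x| → ∞. Suppose there is C₁ > 0 such that for every R ≥ R₀, sup_{|x| ≥ R} |Δv(x) − v(x)| ≤ C₁ (sup_{|x| ≥ R} |v(x)|)². Then for every ε ∈ (0,1) there exists C > 0 such that |v(x)| ≤ C e^{−(1−ε)|x|} for all |x| ≥ R₀. -/

import Mathlib

/-!
Outside the ball of radius `R`, both `v` and `-v` satisfy `Δf ≥ f - B` with `B = C₁ M(R)²`, where
`M(R) = sup_{|y| ≥ R} |v y|`. Away from the origin `Δ e^{-|x|} ≤ e^{-|x|}` (the radial second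
derivative is `e^{-|x|}`, the tangential ones are `≤ 0` since `|x|` is minimal along tangent
lines), so the maximum principle bounds `|v x|` by `M(R) e^{R - |x|} + C₁ M(R)²`. Once `C₁ M(R)` is
small this gives `M(R + 1) ≤ e^{-1/2} M(R)`, hence decay at rate `1/2`. Decay at rate `μ`, inserted
with `R = |x| / (1 + μ)`, improves to rate `2μ / (1 + μ)`, and these rates tend to `1`.
-/

open MeasureTheory Filter

/-- The Euclidean Laplacian on `ℝ²`: the sum of the two pure second partial derivatives. -/
noncomputable def lap2 (f : EuclideanSpace ℝ (Fin 2) → ℝ) (x : EuclideanSpace ℝ (Fin 2)) : ℝ :=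
  ∑ i : Fin 2, iteratedFDeriv ℝ 2 f x ![EuclideanSpace.single i 1, EuclideanSpace.single i 1]

open Real Set Topology Asymptotics Bornology Laplacian InnerProductSpace

theorem IsLocalMax.deriv_deriv_nonpos {g : ℝ → ℝ} {a : ℝ} (h : IsLocalMax g a)
    (hc : ContinuousAt g a) : deriv (deriv g) a ≤ 0 := by
  by_contra! hpos
  have hconst : g =ᶠ[𝓝 a] fun _ => g a :=
    (h.and (isLocalMin_of_deriv_deriv_pos hpos h.deriv_eq_zero hc)).mono fun t ht =>
      le_antisymm ht.1 ht.2
  have : deriv g =ᶠ[𝓝 a] fun _ => 0 := hconst.deriv.trans (by simp)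
  simp [this.deriv_eq] at hpos

theorem iteratedDeriv_two_mul_exp_neg_mul_add (A l r : ℝ) :
    iteratedDeriv 2 (fun t : ℝ => A * exp (-(l * (r + t)))) 0 = l ^ 2 * (A * exp (-(l * r))) := by
  have hderiv (c : ℝ) : deriv (fun t : ℝ => c * exp (-(l * (r + t))))
      = fun t => (-l * c) * exp (-(l * (r + t))) := by
    ext t
    have : HasDerivAt (fun t : ℝ => -(l * (r + t))) (-l) t := by
      simpa using (((hasDerivAt_id t).const_add r).const_mul l).fun_neg
    rw [(this.exp.const_mul c).deriv]
    ring
  simp only [iteratedDeriv_succ', iteratedDeriv_zero, hderiv]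
  simp
  ring

section SecondDerivative

variable {E : Type*} [NormedAddCommGroup E] [NormedSpace ℝ E]

theorem iteratedDeriv_two_comp_add_smul {f : E → ℝ} {x : E} (hf : ContDiffAt ℝ 2 f x) (e : E) :
    iteratedDeriv 2 (fun t : ℝ => f (x + t • e)) 0 = iteratedFDeriv ℝ 2 f x (fun _ => e) := by
  have hline : ContDiff ℝ 2 (fun t : ℝ => x + t • e) := by fun_prop
  have hderiv : deriv (fun s : ℝ => s • e) = fun _ => e := by
    ext t; simpa using ((hasDerivAt_id t).smul_const e).deriv
  have := iteratedDeriv_vcomp_two (f := fun t : ℝ => x + t • e) (x := 0) (by simpa using hf)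
    hline.contDiffAt
  simpa [Function.comp_def, iteratedDeriv_succ', hderiv] using this

theorem iteratedFDeriv_two_nonpos_of_isLocalMax_line {f : E → ℝ} {x e : E}
    (hf : ContDiffAt ℝ 2 f x) (h : IsLocalMax (fun t : ℝ => f (x + t • e)) 0) :
    iteratedFDeriv ℝ 2 f x (fun _ => e) ≤ 0 := by
  rw [← iteratedDeriv_two_comp_add_smul hf, iteratedDeriv_succ', iteratedDeriv_one]
  exact h.deriv_deriv_nonpos (hf.continuousAt.comp_of_eq (by fun_prop) (by simp))

end SecondDerivative

section Barrier

variable {E : Type*} [NormedAddCommGroup E] [InnerProductSpace ℝ E]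

theorem IsLocalMax.laplacian_nonpos [FiniteDimensional ℝ E] {f : E → ℝ} {x : E}
    (h : IsLocalMax f x) (hf : ContDiffAt ℝ 2 f x) : Δ f x ≤ 0 := by
  rw [laplacian_eq_iteratedFDeriv_stdOrthonormalBasis]
  refine Finset.sum_nonpos fun i _ => ?_
  simp only [Matrix.vec_single_eq_const, Matrix.vecCons_const]
  refine iteratedFDeriv_two_nonpos_of_isLocalMax_line hf ?_
  exact IsLocalMax.comp_continuous (g := fun t : ℝ => x + t • stdOrthonormalBasis ℝ E i)
    (by simpa using h) (by fun_prop)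

theorem contDiffAt_mul_exp_neg_mul_norm (A l : ℝ) {x : E} (hx : x ≠ 0) :
    ContDiffAt ℝ 2 (fun y : E => A * exp (-(l * ‖y‖))) x := by
  have := contDiffAt_norm ℝ (n := 2) hx
  fun_prop

theorem iteratedFDeriv_two_mul_exp_neg_mul_norm_radial (A l : ℝ) {x : E} (hx : x ≠ 0) :
    iteratedFDeriv ℝ 2 (fun y : E => A * exp (-(l * ‖y‖))) x (fun _ => ‖x‖⁻¹ • x)
      = l ^ 2 * (A * exp (-(l * ‖x‖))) := by
  have hxpos : 0 < ‖x‖ := norm_pos_iff.mpr hx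
  have hray : ∀ᶠ t in 𝓝 (0 : ℝ), ‖x + t • (‖x‖⁻¹ • x)‖ = ‖x‖ + t := by
    filter_upwards [lt_mem_nhds (neg_neg_of_pos hxpos)] with t ht
    have hpos : 0 ≤ 1 + t / ‖x‖ := by
      rw [← neg_le_iff_add_nonneg', le_div_iff₀ hxpos]; linarith
    have : x + t • (‖x‖⁻¹ • x) = (1 + t / ‖x‖) • x := by
      simp only [smul_smul, add_smul, one_smul, div_eq_mul_inv]
    rw [this, norm_smul, Real.norm_of_nonneg hpos]
    field_simp
  have hslice : (fun t : ℝ => A * exp (-(l * ‖x + t • (‖x‖⁻¹ • x)‖)))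
      =ᶠ[𝓝 0] fun t => A * exp (-(l * (‖x‖ + t))) :=
    hray.mono fun t ht => by simp only [ht]
  rw [← iteratedDeriv_two_comp_add_smul (contDiffAt_mul_exp_neg_mul_norm A l hx),
    hslice.iteratedDeriv_eq 2, iteratedDeriv_two_mul_exp_neg_mul_add]

theorem iteratedFDeriv_two_mul_exp_neg_mul_norm_nonpos {A l : ℝ} (hA : 0 ≤ A) (hl : 0 ≤ l)
    {x e : E} (hx : x ≠ 0) (he : ⟪x, e⟫_ℝ = 0) :
    iteratedFDeriv ℝ 2 (fun y : E => A * exp (-(l * ‖y‖))) x (fun _ => e) ≤ 0 := by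
  refine iteratedFDeriv_two_nonpos_of_isLocalMax_line (contDiffAt_mul_exp_neg_mul_norm A l hx)
    (Eventually.of_forall fun t => ?_)
  have hpyth := norm_add_sq_eq_norm_sq_add_norm_sq_real
    (by rw [real_inner_smul_right, he, mul_zero] : ⟪x, t • e⟫_ℝ = 0)
  have : ‖x‖ ≤ ‖x + t • e‖ := (mul_self_le_mul_self_iff (norm_nonneg _) (norm_nonneg _)).2
    (by nlinarith [mul_self_nonneg ‖t • e‖])
  simp only [zero_smul, add_zero]
  gcongr

theorem laplacian_mul_exp_neg_mul_norm_le [FiniteDimensional ℝ E] {A l : ℝ} (hA : 0 ≤ A)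
    (hl : 0 ≤ l) {x : E} (hx : x ≠ 0) :
    Δ (fun y : E => A * exp (-(l * ‖y‖))) x ≤ l ^ 2 * (A * exp (-(l * ‖x‖))) := by
  classical
  set e₁ : E := ‖x‖⁻¹ • x
  have hxpos : 0 < ‖x‖ := norm_pos_iff.mpr hx
  have he₁ : Orthonormal ℝ ((↑) : ({e₁} : Set E) → E) := by
    rw [orthonormal_subtype_iff_ite]
    rintro v rfl w rfl
    simp [e₁, norm_smul, hxpos.ne']
  obtain ⟨u, b, hsub, hb⟩ := he₁.exists_orthonormalBasis_extension
  set i₁ : u := ⟨e₁, hsub rfl⟩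
  have hbi₁ : b i₁ = e₁ := by rw [hb]
  have htangent (i : u) (hi : i ∈ Finset.univ.erase i₁) :
      iteratedFDeriv ℝ 2 (fun y : E => A * exp (-(l * ‖y‖))) x (fun _ => b i) ≤ 0 := by
    refine iteratedFDeriv_two_mul_exp_neg_mul_norm_nonpos hA hl hx ?_
    have he₁i : ⟪e₁, b i⟫_ℝ = 0 := hbi₁ ▸ b.orthonormal.2 (Finset.ne_of_mem_erase hi).symm
    have hxe : x = ‖x‖ • e₁ := by simp [e₁, smul_smul, hxpos.ne']
    rw [hxe, real_inner_smul_left, he₁i, mul_zero]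
  rw [laplacian_eq_iteratedFDeriv_orthonormalBasis _ b]
  simp only [Matrix.vec_single_eq_const, Matrix.vecCons_const]
  rw [← Finset.add_sum_erase _ _ (Finset.mem_univ i₁), hbi₁,
    iteratedFDeriv_two_mul_exp_neg_mul_norm_radial A l hx]
  linarith [Finset.sum_nonpos htangent]

theorem le_mul_exp_neg_mul_norm_add_of_le_laplacian [FiniteDimensional ℝ E] {f : E → ℝ}
    {R A B l : ℝ} (hR : 0 ≤ R) (hA : 0 ≤ A) (hB : 0 ≤ B) (hl₀ : 0 ≤ l) (hl₁ : l ≤ 1)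
    (hf : ContDiffOn ℝ 2 f {x | R ≤ ‖x‖}) (hlim : Tendsto f (cobounded E) (𝓝 0))
    (hbdry : ∀ x, ‖x‖ = R → f x ≤ A * exp (-(l * R)) + B)
    (hsub : ∀ x, R < ‖x‖ → f x - B ≤ Δ f x) {x : E} (hx : R ≤ ‖x‖) :
    f x ≤ A * exp (-(l * ‖x‖)) + B := by
  rw [Metric.cobounded_eq_cocompact] at hlim
  by_contra! hx₀
  set φ : E → ℝ := fun y => A * exp (-(l * ‖y‖))
  have hφ₀ (y : E) : 0 ≤ φ y := by positivity
  have hux : B < (f - φ) x := by simp only [Pi.sub_apply, φ]; linarith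
  have hfar : ∀ᶠ y in cocompact E ⊓ 𝓟 {x | R ≤ ‖x‖}, (f - φ) y ≤ (f - φ) x := by
    refine Eventually.filter_mono inf_le_left ?_
    filter_upwards [hlim (Iio_mem_nhds (hB.trans_lt hux))] with y hy
    linarith [hφ₀ y, show f y < (f - φ) x from hy, show (f - φ) y = f y - φ y from rfl]
  obtain ⟨x₁, hx₁, hmax⟩ := (hf.continuousOn.sub (by fun_prop)).exists_isMaxOn'
    (isClosed_le continuous_const continuous_norm) hx hfar
  have hux₁ : B < f x₁ - φ x₁ := hux.trans_le (hmax hx)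
  have hR₁ : R < ‖x₁‖ := by
    refine lt_of_le_of_ne hx₁ fun h => ?_
    have := hbdry x₁ h.symm
    simp only [φ, ← h] at hux₁
    linarith
  have hnhds : {x : E | R ≤ ‖x‖} ∈ 𝓝 x₁ :=
    mem_of_superset ((isOpen_lt continuous_const continuous_norm).mem_nhds hR₁)
      fun y (hy : R < ‖y‖) => hy.le
  have hfx₁ : ContDiffAt ℝ 2 f x₁ := hf.contDiffAt hnhds
  have hx₁ : x₁ ≠ 0 := norm_pos_iff.1 (hR.trans_lt hR₁)
  have hφx₁ : ContDiffAt ℝ 2 φ x₁ := contDiffAt_mul_exp_neg_mul_norm A l hx₁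
  have hΔu := (hmax.isLocalMax hnhds).laplacian_nonpos (hfx₁.sub hφx₁)
  rw [hfx₁.laplacian_sub hφx₁] at hΔu
  have hΔφ := laplacian_mul_exp_neg_mul_norm_le hA hl₀ hx₁
  have hl2 : l ^ 2 * φ x₁ ≤ φ x₁ := mul_le_of_le_one_left (hφ₀ x₁) (by nlinarith)
  linarith [hsub x₁ hR₁]

end Barrier

theorem isBigO_exp_neg_mul_of_le {μ ν : ℝ} (h : μ ≤ ν) :
    (fun R => exp (-(ν * R))) =O[atTop] fun R => exp (-(μ * R)) := by
  refine isBigO_exp_comp_exp_comp.2 (isBoundedUnder_of_eventually_le (a := 0) ?_)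
  filter_upwards [eventually_ge_atTop 0] with R hR
  simp only [Pi.sub_apply]
  nlinarith

theorem isBigO_exp_of_le_exp_mul_add {m : ℝ → ℝ} {R₁ T μ : ℝ} (hT : 0 < T) (hμ : 0 ≤ μ)
    (hm : AntitoneOn m (Ici R₁)) (hm₀ : ∀ R, R₁ ≤ R → 0 ≤ m R)
    (hstep : ∀ R, R₁ ≤ R → m (R + T) ≤ exp (-(μ * T)) * m R) :
    m =O[atTop] fun R => exp (-(μ * R)) := by
  have hiter (n : ℕ) : m (R₁ + n * T) ≤ exp (-(μ * (n * T))) * m R₁ := by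
    induction n with
    | zero => simp
    | succ n ih =>
      calc m (R₁ + (n + 1 : ℕ) * T) = m (R₁ + n * T + T) := by push_cast; ring_nf
        _ ≤ exp (-(μ * T)) * m (R₁ + n * T) := hstep _ (by nlinarith [n.cast_nonneg (α := ℝ)])
        _ ≤ exp (-(μ * T)) * (exp (-(μ * (n * T))) * m R₁) := by gcongr
        _ = exp (-(μ * ((n + 1 : ℕ) * T))) * m R₁ := by
          rw [← mul_assoc, ← exp_add]; push_cast; ring_nf
  refine IsBigO.of_bound (exp (μ * (T + R₁)) * m R₁) ?_
  filter_upwards [eventually_ge_atTop R₁] with R hR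
  set n := ⌊(R - R₁) / T⌋₊
  have hn : n * T ≤ R - R₁ := (le_div_iff₀ hT).1 (Nat.floor_le (div_nonneg (by linarith) hT.le))
  have hn' : R - R₁ < (n + 1) * T := (div_lt_iff₀ hT).1 (Nat.lt_floor_add_one _)
  rw [norm_of_nonneg (hm₀ R hR), norm_of_nonneg (exp_pos _).le]
  calc m R ≤ m (R₁ + n * T) := hm (by simp; positivity) (by simp; linarith) (by linarith)
    _ ≤ exp (-(μ * (n * T))) * m R₁ := hiter n
    _ ≤ exp (μ * (T + R₁) + -(μ * R)) * m R₁ := by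
        gcongr ?_ * _
        · exact hm₀ R₁ le_rfl
        · exact exp_le_exp.2 (by nlinarith)
    _ = exp (μ * (T + R₁)) * m R₁ * exp (-(μ * R)) := by rw [exp_add]; ring

noncomputable def tailSup {E : Type*} [Norm E] (v : E → ℝ) (R : ℝ) : ℝ :=
  sSup ((fun y => |v y|) '' {y | R ≤ ‖y‖})

section TailSup

variable {E : Type*} [NormedAddCommGroup E] {v : E → ℝ} {R₀ R K C₁ : ℝ}

lemma tailSup_nonneg : 0 ≤ tailSup v R :=
  Real.sSup_nonneg (by rintro _ ⟨y, -, rfl⟩; exact abs_nonneg _)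

lemma tailSup_le (hK : 0 ≤ K) (h : ∀ x, R ≤ ‖x‖ → |v x| ≤ K) : tailSup v R ≤ K :=
  Real.sSup_le (by rintro _ ⟨y, hy, rfl⟩; exact h y hy) hK

lemma abs_le_tailSup (hb : BddAbove ((fun y => |v y|) '' {y | R₀ ≤ ‖y‖})) (hR : R₀ ≤ R) {x : E}
    (hx : R ≤ ‖x‖) : |v x| ≤ tailSup v R :=
  le_csSup (hb.mono (image_mono fun _ hy => hR.trans hy)) ⟨x, hx, rfl⟩

lemma tailSup_antitoneOn (hb : BddAbove ((fun y => |v y|) '' {y | R₀ ≤ ‖y‖})) :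
    AntitoneOn (tailSup v) (Ici R₀) := fun _ hR _ _ hRR' =>
  tailSup_le tailSup_nonneg fun _ hx => abs_le_tailSup hb hR (hRR'.trans hx)

lemma tendsto_tailSup_atTop (hlim : Tendsto v (cobounded E) (𝓝 0)) :
    Tendsto (tailSup v) atTop (𝓝 0) := by
  refine tendsto_order.2 ⟨fun a ha => Eventually.of_forall fun R => ha.trans_le tailSup_nonneg,
    fun a ha => ?_⟩
  obtain ⟨ρ, -, hρ⟩ := hasBasis_cobounded_norm.eventually_iff.1
    (hlim.eventually (Metric.closedBall_mem_nhds 0 (half_pos ha)))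
  filter_upwards [eventually_ge_atTop ρ] with R hR
  refine (tailSup_le (half_pos ha).le fun x hx => ?_).trans_lt (half_lt_self ha)
  simpa using hρ (hR.trans hx)

lemma bddAbove_abs_image_of_tendsto [ProperSpace E] (hv : ContinuousOn v {x | R₀ ≤ ‖x‖})
    (hlim : Tendsto v (cobounded E) (𝓝 0)) : BddAbove ((fun y => |v y|) '' {y | R₀ ≤ ‖y‖}) := by
  obtain ⟨ρ, -, hρ⟩ := hasBasis_cobounded_norm.eventually_iff.1
    (hlim.eventually (Metric.closedBall_mem_nhds 0 one_pos))
  have hK : IsCompact ({x : E | R₀ ≤ ‖x‖} ∩ Metric.closedBall 0 ρ) :=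
    (isCompact_closedBall 0 ρ).inter_left (isClosed_le continuous_const continuous_norm)
  obtain ⟨K, hK⟩ := hK.bddAbove_image (hv.mono inter_subset_left).abs
  refine ⟨max K 1, ?_⟩
  rintro _ ⟨x, hx, rfl⟩
  rcases le_total ‖x‖ ρ with hxρ | hxρ
  · exact (hK ⟨x, ⟨hx, by simpa using hxρ⟩, rfl⟩).trans (le_max_left _ _)
  · exact (by simpa using hρ hxρ : |v x| ≤ 1).trans (le_max_right _ _)

lemma exists_pos_abs_le_mul_exp_of_isBigO {μ : ℝ} (hμ : 0 ≤ μ)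
    (hb : BddAbove ((fun y => |v y|) '' {y | R₀ ≤ ‖y‖}))
    (hv : v =O[cobounded E] fun x => exp (-(μ * ‖x‖))) :
    ∃ C > 0, ∀ x, R₀ ≤ ‖x‖ → |v x| ≤ C * exp (-(μ * ‖x‖)) := by
  obtain ⟨c, hc, hvc⟩ := hv.exists_pos
  obtain ⟨ρ, -, hρ⟩ := hasBasis_cobounded_norm.eventually_iff.1 hvc.bound
  obtain ⟨K, hK⟩ := hb
  set K' := max K 0 * exp (μ * ρ)
  refine ⟨c + K', by positivity, fun x hx => ?_⟩
  have hK' : 0 ≤ K' * exp (-(μ * ‖x‖)) := by positivity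
  rcases le_total ρ ‖x‖ with hxρ | hxρ
  · have := hρ hxρ
    rw [norm_of_nonneg (exp_pos _).le, Real.norm_eq_abs] at this
    linarith
  · have hvK : |v x| ≤ max K 0 := (hK ⟨x, hx, rfl⟩).trans (le_max_left _ _)
    have : max K 0 ≤ K' * exp (-(μ * ‖x‖)) := by
      rw [mul_assoc, ← exp_add]
      exact le_mul_of_one_le_right (le_max_right _ _) (one_le_exp (by nlinarith))
    nlinarith [(exp_pos (-(μ * ‖x‖))).le]

theorem tailSup_isBigO_of_isBigO {μ : ℝ} (hμ : 0 ≤ μ)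
    (hv : v =O[cobounded E] fun x => exp (-(μ * ‖x‖))) :
    tailSup v =O[atTop] fun R => exp (-(μ * R)) := by
  obtain ⟨c, hc, hvc⟩ := hv.exists_pos
  obtain ⟨ρ, -, hρ⟩ := hasBasis_cobounded_norm.eventually_iff.1 hvc.bound
  refine IsBigO.of_bound c ?_
  filter_upwards [eventually_ge_atTop ρ] with R hR
  rw [norm_of_nonneg tailSup_nonneg, norm_of_nonneg (exp_pos _).le]
  refine tailSup_le (by positivity) fun x hx => ?_
  have := hρ (hR.trans hx)
  rw [norm_of_nonneg (exp_pos _).le, Real.norm_eq_abs] at this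
  exact this.trans (by gcongr)

theorem tailSup_isBigO_exp_neg_half (hb : BddAbove ((fun y => |v y|) '' {y | R₀ ≤ ‖y‖}))
    (hlim : Tendsto v (cobounded E) (𝓝 0))
    (hcmp : ∀ᶠ R in atTop, ∀ x, R ≤ ‖x‖ →
      |v x| ≤ tailSup v R * exp (R - ‖x‖) + C₁ * tailSup v R ^ 2) :
    tailSup v =O[atTop] fun R => exp (-(1 / 2 * R)) := by
  set δ := exp (-(1 / 2 * 1)) - exp (-1)
  have hδ : 0 < δ := sub_pos.2 (exp_lt_exp.2 (by norm_num))
  have hsmall : ∀ᶠ R in atTop, C₁ * tailSup v R < δ := by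
    simpa using (tendsto_order.1 ((tendsto_tailSup_atTop hlim).const_mul C₁)).2 δ (by simpa)
  obtain ⟨R₁, hR₁⟩ := eventually_atTop.1 ((hcmp.and hsmall).and (eventually_ge_atTop R₀))
  refine isBigO_exp_of_le_exp_mul_add one_pos (by norm_num)
    ((tailSup_antitoneOn hb).mono (Ici_subset_Ici.2 (hR₁ R₁ le_rfl).2))
    (fun _ _ => tailSup_nonneg) fun R hR =>
      tailSup_le (mul_nonneg (exp_pos _).le tailSup_nonneg) fun x hx => ?_
  obtain ⟨⟨hcmpR, hsmallR⟩, -⟩ := hR₁ R hR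
  have hM := (tailSup_nonneg (v := v) (R := R))
  have hexp : exp (R - ‖x‖) ≤ exp (-1) := exp_le_exp.2 (by linarith)
  calc |v x| ≤ tailSup v R * exp (R - ‖x‖) + C₁ * tailSup v R ^ 2 := hcmpR x (by linarith)
    _ ≤ tailSup v R * exp (-1) + δ * tailSup v R := by
        nlinarith [mul_le_mul_of_nonneg_left hexp hM, mul_le_mul_of_nonneg_right hsmallR.le hM]
    _ = exp (-(1 / 2 * 1)) * tailSup v R := by ring

theorem tailSup_isBigO_exp_two_mul_div_one_add {μ : ℝ} (hμ : 0 ≤ μ)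
    (hcmp : ∀ᶠ R in atTop, ∀ x, R ≤ ‖x‖ →
      |v x| ≤ tailSup v R * exp (R - ‖x‖) + C₁ * tailSup v R ^ 2)
    (hM : tailSup v =O[atTop] fun R => exp (-(μ * R))) :
    tailSup v =O[atTop] fun R => exp (-(2 * μ / (1 + μ) * R)) := by
  -- comparing at radius `θ |x|` makes both terms of the bound decay at the same rate
  set θ := (1 + μ)⁻¹
  have hθ₀ : 0 < θ := by positivity
  have hθ₁ : θ ≤ 1 := inv_le_one_of_one_le₀ (by linarith)
  have hMθ : (fun r => tailSup v (θ * r)) =O[atTop] fun r => exp (-(μ * (θ * r))) :=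
    hM.comp_tendsto (tendsto_id.const_mul_atTop hθ₀)
  have hbound : (fun r => tailSup v (θ * r) * exp (θ * r - r) + C₁ * tailSup v (θ * r) ^ 2)
      =O[atTop] fun r => exp (-(2 * μ / (1 + μ) * r)) := by
    refine IsBigO.add ?_ ?_
    · refine (hMθ.mul (isBigO_refl (fun r => exp (θ * r - r)) atTop)).congr_right fun r => ?_
      rw [← exp_add]; congr 1; simp only [θ]; field_simp; ring
    · refine ((hMθ.pow 2).const_mul_left C₁).congr_right fun r => ?_
      rw [← exp_nat_mul]; congr 1; simp only [θ]; field_simp; push_cast; ring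
  obtain ⟨ρ, hρ⟩ := eventually_atTop.1 hcmp
  have hv : v =O[cobounded E] fun x => exp (-(2 * μ / (1 + μ) * ‖x‖)) := by
    refine IsBigO.trans ?_ (hbound.comp_tendsto tendsto_norm_cobounded_atTop)
    refine IsBigO.of_bound' ?_
    filter_upwards [eventually_cobounded_le_norm (ρ / θ)] with x hx
    have hρx : ρ ≤ θ * ‖x‖ := by rwa [div_le_iff₀' hθ₀] at hx
    exact (hρ _ hρx x (mul_le_of_le_one_left (norm_nonneg _) hθ₁)).trans (le_abs_self _)
  exact tailSup_isBigO_of_isBigO (by positivity) hv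

end TailSup

section Decay

variable {E : Type*} [NormedAddCommGroup E] [InnerProductSpace ℝ E] [FiniteDimensional ℝ E]
  {v : E → ℝ} {R₀ C₁ : ℝ}

theorem abs_le_tailSup_mul_exp_add (hC2 : ContDiffOn ℝ 2 v {x | R₀ ≤ ‖x‖})
    (hlim : Tendsto v (cobounded E) (𝓝 0)) (hb : BddAbove ((fun y => |v y|) '' {y | R₀ ≤ ‖y‖}))
    {R : ℝ} (hR₀ : R₀ ≤ R) (hR : 0 ≤ R)
    (hquad : ∀ x, R ≤ ‖x‖ → |Δ v x - v x| ≤ C₁ * tailSup v R ^ 2) {x : E} (hx : R ≤ ‖x‖) :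
    |v x| ≤ tailSup v R * exp (R - ‖x‖) + C₁ * tailSup v R ^ 2 := by
  set M := tailSup v R
  have hB : 0 ≤ C₁ * M ^ 2 := (abs_nonneg _).trans (hquad x hx)
  have hv : ContDiffOn ℝ 2 v {x | R ≤ ‖x‖} := hC2.mono fun y (hy : R ≤ ‖y‖) => hR₀.trans hy
  have hcmp (f : E → ℝ) (hf : ContDiffOn ℝ 2 f {x | R ≤ ‖x‖})
      (hflim : Tendsto f (cobounded E) (𝓝 0)) (hfM : ∀ y, R ≤ ‖y‖ → f y ≤ M)
      (hfsub : ∀ y, R < ‖y‖ → f y - C₁ * M ^ 2 ≤ Δ f y) :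
      f x ≤ M * exp (R - ‖x‖) + C₁ * M ^ 2 := by
    have := le_mul_exp_neg_mul_norm_add_of_le_laplacian hR (A := M * exp R)
      (mul_nonneg tailSup_nonneg (exp_pos R).le) hB zero_le_one le_rfl hf hflim
      (fun y hy => ?_) hfsub hx
    · rwa [mul_assoc, ← exp_add, one_mul, ← sub_eq_add_neg] at this
    · rw [mul_assoc, ← exp_add, one_mul, add_neg_cancel, exp_zero, mul_one]
      linarith [hfM y hy.ge]
  rw [abs_le]
  constructor
  · have := hcmp (-v) hv.neg (by simpa using hlim.neg : Tendsto (fun y => -v y) _ _)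
      (fun y hy => (neg_le_abs _).trans (abs_le_tailSup hb hR₀ hy))
      (fun y hy => by
        rw [laplacian_neg]
        simp only [Pi.neg_apply]
        linarith [(abs_le.1 (hquad y hy.le)).2])
    simp only [Pi.neg_apply] at this
    linarith
  · exact hcmp v hv hlim (fun y hy => (le_abs_self _).trans (abs_le_tailSup hb hR₀ hy))
      (fun y hy => by linarith [(abs_le.1 (hquad y hy.le)).1])

theorem isBigO_exp_of_abs_laplacian_sub_le (hC2 : ContDiffOn ℝ 2 v {x | R₀ ≤ ‖x‖})
    (hlim : Tendsto v (cobounded E) (𝓝 0))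
    (hquad : ∀ R, R₀ ≤ R → ∀ x, R ≤ ‖x‖ → |Δ v x - v x| ≤ C₁ * tailSup v R ^ 2)
    {μ : ℝ} (hμ : μ < 1) : v =O[cobounded E] fun x => exp (-(μ * ‖x‖)) := by
  have hb := bddAbove_abs_image_of_tendsto hC2.continuousOn hlim
  have hcmp : ∀ᶠ R in atTop, ∀ x, R ≤ ‖x‖ →
      |v x| ≤ tailSup v R * exp (R - ‖x‖) + C₁ * tailSup v R ^ 2 := by
    filter_upwards [eventually_ge_atTop R₀, eventually_ge_atTop 0] with R hR₀ hR x hx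
    exact abs_le_tailSup_mul_exp_add hC2 hlim hb hR₀ hR (hquad R hR₀) hx
  -- `1 - (2/3)^n / 2` lies below the `n`-th iterate of `μ ↦ 2μ/(1+μ)` started at `1/2`
  have hrate (n : ℕ) : tailSup v =O[atTop] fun R => exp (-((1 - (2 / 3) ^ n / 2) * R)) := by
    induction n with
    | zero => exact (tailSup_isBigO_exp_neg_half hb hlim hcmp).congr_right fun R => by norm_num
    | succ n ih =>
      have ha₀ : 0 ≤ ((2 : ℝ) / 3) ^ n := by positivity
      have ha₁ : ((2 : ℝ) / 3) ^ n ≤ 1 := pow_le_one₀ (by norm_num) (by norm_num)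
      refine (tailSup_isBigO_exp_two_mul_div_one_add (by linarith) hcmp ih).trans
        (isBigO_exp_neg_mul_of_le ?_)
      rw [le_div_iff₀ (by linarith), pow_succ]
      nlinarith
  obtain ⟨n, hn⟩ := exists_pow_lt_of_lt_one (show 0 < 2 * (1 - μ) by linarith)
    (show (2 : ℝ) / 3 < 1 by norm_num)
  have hv : v =O[cobounded E] fun x => tailSup v ‖x‖ := by
    refine IsBigO.of_bound' ?_
    filter_upwards [eventually_cobounded_le_norm R₀] with x hx
    exact (abs_le_tailSup hb hx le_rfl).trans (le_abs_self _)
  exact hv.trans (((hrate n).trans (isBigO_exp_neg_mul_of_le (by linarith))).comp_tendsto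
    tendsto_norm_cobounded_atTop)

end Decay

theorem lap2_eq_laplacian (f : EuclideanSpace ℝ (Fin 2) → ℝ) : lap2 f = Δ f := by
  rw [laplacian_eq_iteratedFDeriv_orthonormalBasis f (EuclideanSpace.basisFun (Fin 2) ℝ)]
  ext x
  simp [lap2, EuclideanSpace.basisFun_apply]

theorem stmt_5_general (R₀ : ℝ) (v : EuclideanSpace ℝ (Fin 2) → ℝ)
    (hC2 : ContDiffOn ℝ 2 v {x | R₀ ≤ ‖x‖})
    (hlim : Tendsto v (comap (fun x : EuclideanSpace ℝ (Fin 2) => ‖x‖) atTop) (nhds 0))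
    (C₁ : ℝ)
    (hquad : ∀ R, R₀ ≤ R → ∀ x, R ≤ ‖x‖ →
      |lap2 v x - v x| ≤ C₁ * (sSup ((fun y => |v y|) '' {y | R ≤ ‖y‖})) ^ 2) :
    ∀ ε, 0 < ε → ε < 1 →
      ∃ C > (0:ℝ), ∀ x, R₀ ≤ ‖x‖ → |v x| ≤ C * Real.exp (-(1 - ε) * ‖x‖) := by
  intro ε hε₀ hε₁
  rw [comap_norm_atTop] at hlim
  rw [lap2_eq_laplacian] at hquad
  simpa only [neg_mul] using exists_pos_abs_le_mul_exp_of_isBigO (by linarith)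
    (bddAbove_abs_image_of_tendsto hC2.continuousOn hlim)
    (isBigO_exp_of_abs_laplacian_sub_le hC2 hlim hquad (μ := 1 - ε) (by linarith))

/-- Conclusion of the iteration: a decaying solution of the exterior problem with quadratic
error decays at any rate `e^{−(1−ε)|x|}` with `ε ∈ (0,1)`. -/
theorem stmt_5 (R₀ : ℝ) (hR₀ : 1 ≤ R₀) (v : EuclideanSpace ℝ (Fin 2) → ℝ)
    (hC2 : ContDiffOn ℝ 2 v {x | R₀ ≤ ‖x‖})
    (hlim : Tendsto v (comap (fun x : EuclideanSpace ℝ (Fin 2) => ‖x‖) atTop) (nhds 0))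
    (C₁ : ℝ) (hC₁ : 0 < C₁)
    (hquad : ∀ R, R₀ ≤ R → ∀ x, R ≤ ‖x‖ →
      |lap2 v x - v x| ≤ C₁ * (sSup ((fun y => |v y|) '' {y | R ≤ ‖y‖})) ^ 2) :
    ∀ ε, 0 < ε → ε < 1 →
      ∃ C > (0:ℝ), ∀ x, R₀ ≤ ‖x‖ → |v x| ≤ C * Real.exp (-(1 - ε) * ‖x‖) :=
  stmt_5_general R₀ v hC2 hlim C₁ hquad
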